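/- Let F be a bialgebra in a braided monoidal category C with braiding c, and let σ : F⊗F → 𝟙 be a morphism. Define the σ-twisted multiplication m_σ := (m⊗σ)∘(id_F⊗c_{F,F}⊗id_F)∘(Δ⊗Δ) : F⊗F → F. If σ is a normalized Sweedler 2-cocycle, i.e. σ∘(id_F⊗m_σ) = σ∘(m_σ⊗id_F) : F⊗F⊗F → 𝟙 and σ∘(η⊗id_F) = ε = σ∘(id_F⊗η), then m_σ is an associative multiplication on F with unit η: m_σ∘(m_σ⊗id_F) = m_σ∘(id_F⊗m_σ) and m_σ∘(η⊗id_F) = id_F = m_σ∘(id_F⊗η). -/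

import Mathlib

open CategoryTheory MonoidalCategory

/-- The middle interchange `(X ⊗ Y) ⊗ (Z ⊗ W) ⟶ (X ⊗ Z) ⊗ (Y ⊗ W)` given by
`id ⊗ c ⊗ id` (with the braiding on the two middle factors). -/
def exch {C : Type*} [Category C] [MonoidalCategory C] [BraidedCategory C]
    (X Y Z W : C) : (X ⊗ Y) ⊗ (Z ⊗ W) ⟶ (X ⊗ Z) ⊗ (Y ⊗ W) :=
  (α_ X Y (Z ⊗ W)).hom ≫ (X ◁ (α_ Y Z W).inv) ≫ (X ◁ ((β_ Y Z).hom ▷ W)) ≫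
    (X ◁ (α_ Z Y W).hom) ≫ (α_ X Z (Y ⊗ W)).inv

/-- A bialgebra in a braided monoidal category. -/
def IsBialgebraIn {C : Type*} [Category C] [MonoidalCategory C] [BraidedCategory C]
    (X : C) (m : X ⊗ X ⟶ X) (η : 𝟙_ C ⟶ X) (Δ : X ⟶ X ⊗ X) (ε : X ⟶ 𝟙_ C) : Prop :=
  (m ▷ X) ≫ m = (α_ X X X).hom ≫ (X ◁ m) ≫ m ∧
  (λ_ X).inv ≫ (η ▷ X) ≫ m = 𝟙 X ∧
  (ρ_ X).inv ≫ (X ◁ η) ≫ m = 𝟙 X ∧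
  Δ ≫ (Δ ▷ X) = Δ ≫ (X ◁ Δ) ≫ (α_ X X X).inv ∧
  Δ ≫ (ε ▷ X) ≫ (λ_ X).hom = 𝟙 X ∧
  Δ ≫ (X ◁ ε) ≫ (ρ_ X).hom = 𝟙 X ∧
  m ≫ Δ = (Δ ⊗ₘ Δ) ≫ exch X X X X ≫ (m ⊗ₘ m) ∧
  m ≫ ε = (ε ⊗ₘ ε) ≫ (λ_ (𝟙_ C)).hom ∧
  η ≫ Δ = (λ_ (𝟙_ C)).inv ≫ (η ⊗ₘ η) ∧
  η ≫ ε = 𝟙 (𝟙_ C)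

/-!
Write `m_σ` as `x ⊗ y ↦ m(x₁ ⊗ y₁) σ(x₂ ⊗ y₂)`, i.e. as the convolution action of `σ` on `m`
over the tensor-product comonoid `F ⊗ F`. Since `m` is comultiplicative,
`Δ(m_σ(x ⊗ y)) = x₁y₁ ⊗ m_σ(x₂ ⊗ y₂)`, so both bracketings of a triple product become
`x₁y₁z₁ σ(…)`, with the two sides of the cocycle identity in the scalar slot. The unit laws hold
because `η` is grouplike and `σ` is normalized.
-/

section ConvAct

open ComonObj

variable {C : Type*} [Category C] [MonoidalCategory C]

/-- In Sweedler notation `x ↦ f(x₁) g(x₂)`: the right action of the convolution algebra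
`X ⟶ 𝟙_ C` on `X ⟶ Y`. -/
def convAct {X Y : C} [ComonObj X] (f : X ⟶ Y) (g : X ⟶ 𝟙_ C) : X ⟶ Y :=
  Δ[X] ≫ (f ⊗ₘ g) ≫ (ρ_ Y).hom

lemma comul_id_eq (Z : C) [ComonObj Z] : 𝟙 Z ≫ Δ[Z] = Δ[Z] ≫ (𝟙 Z ⊗ₘ 𝟙 Z) := by
  rw [Category.id_comp, id_tensorHom_id, Category.comp_id]

variable {W X Y Z : C} [ComonObj W] [ComonObj X]

lemma convAct_comp (f : X ⟶ Y) (g : X ⟶ 𝟙_ C) (h : Y ⟶ Z) :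
    convAct (f ≫ h) g = convAct f g ≫ h := by
  rw [convAct, convAct, Category.assoc, Category.assoc, ← rightUnitor_naturality, ← tensorHom_id,
    tensorHom_comp_tensorHom_assoc, Category.comp_id]

lemma convAct_counit (f : X ⟶ Y) : convAct f ε[X] = f := by
  rw [convAct, comul_counit_hom_assoc, Iso.inv_hom_id, Category.comp_id]

lemma comp_convAct_of_comul_eq {k p q : W ⟶ X} (hk : k ≫ Δ[X] = Δ[W] ≫ (p ⊗ₘ q))
    (f : X ⟶ Y) (g : X ⟶ 𝟙_ C) : k ≫ convAct f g = convAct (p ≫ f) (q ≫ g) := by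
  rw [convAct, reassoc_of% hk, tensorHom_comp_tensorHom_assoc, convAct]

lemma convAct_comul_tensorHom (f : X ⟶ Y) (f' : X ⟶ Z) (g : X ⟶ 𝟙_ C) :
    convAct (Δ[X] ≫ (f ⊗ₘ f')) g = Δ[X] ≫ (f ⊗ₘ convAct f' g) := by
  rw [convAct, convAct, ← Category.id_comp g, ← tensorHom_comp_tensorHom_assoc, tensorHom_id,
    comul_assoc_flip_assoc, ← associator_inv_naturality_assoc, ← whiskerLeft_rightUnitor,
    ← id_tensorHom, ← id_tensorHom, tensorHom_comp_tensorHom, tensorHom_comp_tensorHom]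
  simp only [Category.id_comp, Category.comp_id]

variable [BraidedCategory C]

lemma tensorHom_comul_eq {W' X' : C} [ComonObj W'] [ComonObj X'] {k p q : W ⟶ X}
    {k' p' q' : W' ⟶ X'} (hk : k ≫ Δ[X] = Δ[W] ≫ (p ⊗ₘ q))
    (hk' : k' ≫ Δ[X'] = Δ[W'] ≫ (p' ⊗ₘ q')) :
    (k ⊗ₘ k') ≫ Δ[X ⊗ X'] = Δ[W ⊗ W'] ≫ ((p ⊗ₘ p') ⊗ₘ (q ⊗ₘ q')) := by
  rw [Comon.tensorObj_comul, Comon.tensorObj_comul, tensorHom_comp_tensorHom_assoc, hk, hk',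
    ← tensorHom_comp_tensorHom_assoc, tensorμ_natural, Category.assoc]

lemma whiskerRight_comul_eq {k p q : W ⟶ X} (hk : k ≫ Δ[X] = Δ[W] ≫ (p ⊗ₘ q))
    (Z : C) [ComonObj Z] : k ▷ Z ≫ Δ[X ⊗ Z] = Δ[W ⊗ Z] ≫ (p ▷ Z ⊗ₘ q ▷ Z) := by
  simpa only [tensorHom_id] using tensorHom_comul_eq hk (comul_id_eq Z)

lemma whiskerLeft_comul_eq {k p q : W ⟶ X} (hk : k ≫ Δ[X] = Δ[W] ≫ (p ⊗ₘ q))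
    (Z : C) [ComonObj Z] : Z ◁ k ≫ Δ[Z ⊗ X] = Δ[Z ⊗ W] ≫ (Z ◁ p ⊗ₘ Z ◁ q) := by
  simpa only [id_tensorHom] using tensorHom_comul_eq (comul_id_eq Z) hk

lemma associator_hom_comul (A B D : C) [ComonObj A] [ComonObj B] [ComonObj D] :
    (α_ A B D).hom ≫ Δ[A ⊗ (B ⊗ D)] = Δ[(A ⊗ B) ⊗ D] ≫ ((α_ A B D).hom ⊗ₘ (α_ A B D).hom) := by
  simp only [Comon.tensorObj_comul, Category.assoc]
  rw [← Category.comp_id Δ[D], ← tensorHom_comp_tensorHom_assoc, tensorHom_id,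
    tensor_associativity, associator_naturality_assoc, ← id_tensorHom,
    tensorHom_comp_tensorHom_assoc]
  simp only [Category.comp_id]

lemma leftUnitor_inv_unit_whiskerRight_comul {A : C} [ComonObj A] (η : 𝟙_ C ⟶ A)
    (hη : η ≫ Δ[A] = (λ_ (𝟙_ C)).inv ≫ (η ⊗ₘ η)) :
    ((λ_ X).inv ≫ η ▷ X) ≫ Δ[A ⊗ X] =
      Δ[X] ≫ (((λ_ X).inv ≫ η ▷ X) ⊗ₘ ((λ_ X).inv ≫ η ▷ X)) := by
  let _ : ComonObj (𝟙_ C) := ComonObj.instTensorUnit C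
  have hunitor : (λ_ X).inv ≫ Δ[𝟙_ C ⊗ X] = Δ[X] ≫ ((λ_ X).inv ⊗ₘ (λ_ X).inv) := by
    simp only [Comon.tensorObj_comul, instTensorUnit_comul, tensorμ, braiding_tensorUnit_left]
    monoidal
  rw [Category.assoc, whiskerRight_comul_eq hη, reassoc_of% hunitor, tensorHom_comp_tensorHom]

lemma rightUnitor_inv_whiskerLeft_unit_comul {A : C} [ComonObj A] (η : 𝟙_ C ⟶ A)
    (hη : η ≫ Δ[A] = (λ_ (𝟙_ C)).inv ≫ (η ⊗ₘ η)) :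
    ((ρ_ X).inv ≫ X ◁ η) ≫ Δ[X ⊗ A] =
      Δ[X] ≫ (((ρ_ X).inv ≫ X ◁ η) ⊗ₘ ((ρ_ X).inv ≫ X ◁ η)) := by
  let _ : ComonObj (𝟙_ C) := ComonObj.instTensorUnit C
  have hunitor : (ρ_ X).inv ≫ Δ[X ⊗ 𝟙_ C] = Δ[X] ≫ ((ρ_ X).inv ⊗ₘ (ρ_ X).inv) := by
    simp only [Comon.tensorObj_comul, instTensorUnit_comul, tensorμ, braiding_tensorUnit_right]
    monoidal
  rw [Category.assoc, whiskerLeft_comul_eq hη, reassoc_of% hunitor, tensorHom_comp_tensorHom]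

end ConvAct

section TwistedMul

open ComonObj

variable {C : Type*} [Category C] [MonoidalCategory C] [BraidedCategory C]
  {F : C} [ComonObj F] {m : F ⊗ F ⟶ F} (σ : F ⊗ F ⟶ 𝟙_ C)

lemma convAct_comp_comul (hm : m ≫ Δ[F] = Δ[F ⊗ F] ≫ (m ⊗ₘ m)) :
    convAct m σ ≫ Δ[F] = Δ[F ⊗ F] ≫ (m ⊗ₘ convAct m σ) := by
  rw [← convAct_comp, hm, convAct_comul_tensorHom]

lemma convAct_mul_assoc (hm : m ≫ Δ[F] = Δ[F ⊗ F] ≫ (m ⊗ₘ m))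
    (hassoc : m ▷ F ≫ m = (α_ F F F).hom ≫ F ◁ m ≫ m)
    (hσ : (α_ F F F).hom ≫ F ◁ convAct m σ ≫ σ = convAct m σ ▷ F ≫ σ) :
    convAct m σ ▷ F ≫ convAct m σ = (α_ F F F).hom ≫ F ◁ convAct m σ ≫ convAct m σ := by
  have hcomul := convAct_comp_comul σ hm
  calc convAct m σ ▷ F ≫ convAct m σ
      = convAct (m ▷ F ≫ m) (convAct m σ ▷ F ≫ σ) := by
        rw [comp_convAct_of_comul_eq (whiskerRight_comul_eq hcomul F)]
    _ = convAct ((α_ F F F).hom ≫ F ◁ m ≫ m) ((α_ F F F).hom ≫ F ◁ convAct m σ ≫ σ) := by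
        rw [hassoc, hσ]
    _ = (α_ F F F).hom ≫ convAct (F ◁ m ≫ m) (F ◁ convAct m σ ≫ σ) :=
        (comp_convAct_of_comul_eq (associator_hom_comul F F F) _ _).symm
    _ = (α_ F F F).hom ≫ F ◁ convAct m σ ≫ convAct m σ := by
        rw [comp_convAct_of_comul_eq (whiskerLeft_comul_eq hcomul F)]

lemma convAct_one_mul {η : 𝟙_ C ⟶ F} (hη : η ≫ Δ[F] = (λ_ (𝟙_ C)).inv ≫ (η ⊗ₘ η))
    (hm : (λ_ F).inv ≫ η ▷ F ≫ m = 𝟙 F) (hσ : (λ_ F).inv ≫ η ▷ F ≫ σ = ε[F]) :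
    (λ_ F).inv ≫ η ▷ F ≫ convAct m σ = 𝟙 F := by
  rw [← Category.assoc, comp_convAct_of_comul_eq (leftUnitor_inv_unit_whiskerRight_comul η hη),
    Category.assoc, Category.assoc, hm, hσ, convAct_counit]

lemma convAct_mul_one {η : 𝟙_ C ⟶ F} (hη : η ≫ Δ[F] = (λ_ (𝟙_ C)).inv ≫ (η ⊗ₘ η))
    (hm : (ρ_ F).inv ≫ F ◁ η ≫ m = 𝟙 F) (hσ : (ρ_ F).inv ≫ F ◁ η ≫ σ = ε[F]) :
    (ρ_ F).inv ≫ F ◁ η ≫ convAct m σ = 𝟙 F := by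
  rw [← Category.assoc, comp_convAct_of_comul_eq (rightUnitor_inv_whiskerLeft_unit_comul η hη),
    Category.assoc, Category.assoc, hm, hσ, convAct_counit]

end TwistedMul

lemma exch_eq_tensorμ {C : Type*} [Category C] [MonoidalCategory C] [BraidedCategory C]
    (X Y Z W : C) : exch X Y Z W = tensorμ X Y Z W := by
  simp [exch, tensorμ]

abbrev IsBialgebraIn.comonObj {C : Type*} [Category C] [MonoidalCategory C] [BraidedCategory C]
    {F : C} {m : F ⊗ F ⟶ F} {η : 𝟙_ C ⟶ F} {Δ : F ⟶ F ⊗ F} {ε : F ⟶ 𝟙_ C}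
    (hF : IsBialgebraIn F m η Δ ε) : ComonObj F where
  counit := ε
  comul := Δ
  counit_comul := (Iso.comp_hom_eq_id _).mp (by simpa only [Category.assoc] using hF.2.2.2.2.1)
  comul_counit := (Iso.comp_hom_eq_id _).mp (by simpa only [Category.assoc] using hF.2.2.2.2.2.1)
  comul_assoc := by
    rw [← Category.assoc Δ, hF.2.2.2.1, Category.assoc, Category.assoc, Iso.inv_hom_id,
      Category.comp_id]

/-- If `σ : F ⊗ F ⟶ 𝟙` is a normalized Sweedler 2-cocycle on a
bialgebra `F` in a braided monoidal category, then the `σ`-twisted multiplication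
`m_σ := (m ⊗ σ) ∘ (id ⊗ c ⊗ id) ∘ (Δ ⊗ Δ)` is associative with unit `η`. -/
theorem statement12 {C : Type*} [Category C] [MonoidalCategory C] [BraidedCategory C]
    (F : C) (m : F ⊗ F ⟶ F) (η : 𝟙_ C ⟶ F) (Δ : F ⟶ F ⊗ F) (ε : F ⟶ 𝟙_ C)
    (hF : IsBialgebraIn F m η Δ ε)
    (σ : F ⊗ F ⟶ 𝟙_ C) :
    ∀ mσ : F ⊗ F ⟶ F, mσ = (Δ ⊗ₘ Δ) ≫ exch F F F F ≫ (m ⊗ₘ σ) ≫ (ρ_ F).hom →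
      -- σ is a normalized Sweedler 2-cocycle
      ((α_ F F F).hom ≫ (F ◁ mσ) ≫ σ = (mσ ▷ F) ≫ σ) →
      ((λ_ F).inv ≫ (η ▷ F) ≫ σ = ε) →
      ((ρ_ F).inv ≫ (F ◁ η) ≫ σ = ε) →
      -- conclusion: m_σ is associative and unital
      ((mσ ▷ F) ≫ mσ = (α_ F F F).hom ≫ (F ◁ mσ) ≫ mσ ∧
       (λ_ F).inv ≫ (η ▷ F) ≫ mσ = 𝟙 F ∧
       (ρ_ F).inv ≫ (F ◁ η) ≫ mσ = 𝟙 F) := by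
  intro mσ hmσ hcocycle hσl hσr
  let _ : ComonObj F := hF.comonObj
  obtain ⟨hassoc, hlu, hru, -, -, -, hmul, -, hη, -⟩ := id hF
  have hcomul : ComonObj.comul (X := F ⊗ F) = (Δ ⊗ₘ Δ) ≫ exch F F F F := by
    rw [Comon.tensorObj_comul, exch_eq_tensorμ]
    rfl
  rw [← Category.assoc, ← hcomul] at hmσ hmul
  subst hmσ
  exact ⟨convAct_mul_assoc σ hmul hassoc hcocycle, convAct_one_mul σ hη hlu hσl,
    convAct_mul_one σ hη hru hσr⟩
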